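/- arXiv:2302.08598 — 5 statements merged into one kernel-verified Lean document; each statement's English description precedes it below -/
import Mathlib

section
/- Suppose s₁ : B₁ → A₂ is a bijection, the A-sequence is exact at A₁ and A₂ (i.e. range r₀ = ker r₁ and range r₁ = ker r₂), the B-sequence is exact at B₁ and B₂ (i.e. range t₀ = ker t₁ and range t₁ = ker t₂), and the diagram commutes. Then the derived sequence A₀ × B₀ →[(a,b) ↦ r₀ a + s₀ b] A₁ →[t₁ ∘ s₁⁻¹ ∘ r₁] B₂ →[b ↦ (s₂ b, t₂ b)] A₃ × B₃ is exact at A₁ and at B₂; that is, the kernel of t₁ ∘ s₁⁻¹ ∘ r₁ equals the sum of subspaces (range r₀) + (range s₀), and (ker s₂) ∩ (ker t₂) equals the range of t₁ ∘ s₁⁻¹ ∘ r₁. -/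
/-- Proposition 2.3(1): exactness of the derived complex. Given two exact sequences of
Banach spaces connected by commuting diagonal maps, with `s₁ : B₁ → A₂` a bijection,
the derived sequence
`A₀ × B₀ → A₁ → B₂ → A₃ × B₃`
with maps `(a,b) ↦ r₀ a + s₀ b`, `t₁ ∘ s₁⁻¹ ∘ r₁`, `b ↦ (s₂ b, t₂ b)` is exact at `A₁`
and at `B₂`. -/
theorem derived_complex_exact
    {A₀ A₁ A₂ A₃ B₀ B₁ B₂ B₃ : Type*}
    [NormedAddCommGroup A₀] [NormedSpace ℝ A₀] [CompleteSpace A₀]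
    [NormedAddCommGroup A₁] [NormedSpace ℝ A₁] [CompleteSpace A₁]
    [NormedAddCommGroup A₂] [NormedSpace ℝ A₂] [CompleteSpace A₂]
    [NormedAddCommGroup A₃] [NormedSpace ℝ A₃] [CompleteSpace A₃]
    [NormedAddCommGroup B₀] [NormedSpace ℝ B₀] [CompleteSpace B₀]
    [NormedAddCommGroup B₁] [NormedSpace ℝ B₁] [CompleteSpace B₁]
    [NormedAddCommGroup B₂] [NormedSpace ℝ B₂] [CompleteSpace B₂]
    [NormedAddCommGroup B₃] [NormedSpace ℝ B₃] [CompleteSpace B₃]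
    (r₀ : A₀ →L[ℝ] A₁) (r₁ : A₁ →L[ℝ] A₂) (r₂ : A₂ →L[ℝ] A₃)
    (t₀ : B₀ →L[ℝ] B₁) (t₁ : B₁ →L[ℝ] B₂) (t₂ : B₂ →L[ℝ] B₃)
    (s₀ : B₀ →L[ℝ] A₁) (s₁ : B₁ →L[ℝ] A₂) (s₂ : B₂ →L[ℝ] A₃)
    (hs₁ : Function.Bijective s₁)
    -- exactness of the A-sequence at A₁ and A₂
    (hA₁ : Set.range r₀ = {x : A₁ | r₁ x = 0})
    (hA₂ : Set.range r₁ = {x : A₂ | r₂ x = 0})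
    -- exactness of the B-sequence at B₁ and B₂
    (hB₁ : Set.range t₀ = {x : B₁ | t₁ x = 0})
    (hB₂ : Set.range t₁ = {x : B₂ | t₂ x = 0})
    -- commutativity of the diagram
    (hc₀ : ∀ b : B₀, r₁ (s₀ b) = s₁ (t₀ b))
    (hc₁ : ∀ b : B₁, r₂ (s₁ b) = s₂ (t₁ b)) :
    -- exactness at A₁: ker (t₁ ∘ s₁⁻¹ ∘ r₁) = range r₀ + range s₀
    ({a : A₁ | t₁ (Function.invFun s₁ (r₁ a)) = 0}
        = {x : A₁ | ∃ a₀ : A₀, ∃ b₀ : B₀, x = r₀ a₀ + s₀ b₀}) ∧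
    -- exactness at B₂: ker s₂ ∩ ker t₂ = range (t₁ ∘ s₁⁻¹ ∘ r₁)
    ({b : B₂ | s₂ b = 0 ∧ t₂ b = 0}
        = Set.range (fun a : A₁ => t₁ (Function.invFun s₁ (r₁ a)))) := by

  have hleft := Function.leftInverse_invFun hs₁.1
  have hright := Function.rightInverse_invFun hs₁.2
  constructor
  · ext a
    simp only [Set.mem_setOf_eq]
    constructor
    · intro h
      have hb : ∃ b₀ : B₀, t₀ b₀ = Function.invFun s₁ (r₁ a) := by
        have : Function.invFun s₁ (r₁ a) ∈ Set.range t₀ := by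
          rw [hB₁]; exact h
        exact this
      obtain ⟨b₀, hb₀⟩ := hb
      have h1 : r₁ (s₀ b₀) = r₁ a := by
        rw [hc₀, hb₀, hright (r₁ a)]
      have h2 : r₁ (a - s₀ b₀) = 0 := by
        rw [map_sub, h1, sub_self]
      have : a - s₀ b₀ ∈ Set.range r₀ := by rw [hA₁]; exact h2
      obtain ⟨a₀, ha₀⟩ := this
      exact ⟨a₀, b₀, by rw [ha₀]; abel⟩
    · rintro ⟨a₀, b₀, rfl⟩
      have h1 : r₁ (r₀ a₀ + s₀ b₀) = s₁ (t₀ b₀) := by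
        have h0 : r₁ (r₀ a₀) = 0 := by
          have : r₀ a₀ ∈ Set.range r₀ := ⟨a₀, rfl⟩
          rw [hA₁] at this; exact this
        rw [map_add, h0, hc₀, zero_add]
      rw [h1, hleft (t₀ b₀)]
      have : t₀ b₀ ∈ Set.range t₀ := ⟨b₀, rfl⟩
      rw [hB₁] at this; exact this
  · ext b
    simp only [Set.mem_setOf_eq, Set.mem_range]
    constructor
    · rintro ⟨hs, ht⟩
      have : b ∈ Set.range t₁ := by rw [hB₂]; exact ht
      obtain ⟨b₁, hb₁⟩ := this
      have h1 : r₂ (s₁ b₁) = 0 := by rw [hc₁, hb₁, hs]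
      have : s₁ b₁ ∈ Set.range r₁ := by rw [hA₂]; exact h1
      obtain ⟨a, ha⟩ := this
      refine ⟨a, ?_⟩
      rw [ha, hleft b₁, hb₁]
    · rintro ⟨a, rfl⟩
      set c := Function.invFun s₁ (r₁ a) with hc
      have hsc : s₁ c = r₁ a := hright (r₁ a)
      constructor
      · rw [← hc₁ c, hsc]
        have : r₁ a ∈ Set.range r₁ := ⟨a, rfl⟩
        rw [hA₂] at this; exact this
      · have : t₁ c ∈ Set.range t₁ := ⟨c, rfl⟩
        rw [hB₂] at this; exact this
end

section
/- For every smooth matrix field u : ℝ³ → ℝ^{3×3}, there holds pointwise div(Ξ ∘ u) = 2 vskw(curl u), where Ξ is applied to u pointwise. -/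
open Matrix

/-- Partial derivative `∂ f / ∂ xᵢ`. -/
noncomputable def pder (i : Fin 3) (f : (Fin 3 → ℝ) → ℝ) : (Fin 3 → ℝ) → ℝ :=
  fun x => fderiv ℝ f x (Pi.single i 1)

/-- Curl of a vector field on ℝ³. -/
noncomputable def vcurl (v : (Fin 3 → ℝ) → (Fin 3 → ℝ)) : (Fin 3 → ℝ) → (Fin 3 → ℝ) :=
  fun x => ![pder 1 (fun y => v y 2) x - pder 2 (fun y => v y 1) x,
             pder 2 (fun y => v y 0) x - pder 0 (fun y => v y 2) x,
             pder 0 (fun y => v y 1) x - pder 1 (fun y => v y 0) x]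

/-- Divergence of a vector field on ℝ³. -/
noncomputable def vdiv (v : (Fin 3 → ℝ) → (Fin 3 → ℝ)) : (Fin 3 → ℝ) → ℝ :=
  fun x => ∑ i, pder i (fun y => v y i) x

/-- Row-wise curl of a matrix field on ℝ³. -/
noncomputable def mcurl (u : (Fin 3 → ℝ) → Matrix (Fin 3) (Fin 3) ℝ) :
    (Fin 3 → ℝ) → Matrix (Fin 3) (Fin 3) ℝ :=
  fun x => Matrix.of fun i => vcurl (fun y => u y i) x

/-- Gradient (Jacobian) of a vector field: `(grad v)ᵢⱼ = ∂vᵢ/∂xⱼ`. -/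
noncomputable def gradv (v : (Fin 3 → ℝ) → (Fin 3 → ℝ)) :
    (Fin 3 → ℝ) → Matrix (Fin 3) (Fin 3) ℝ :=
  fun x => Matrix.of fun i j => pder j (fun y => v y i) x

/-- `mskw v` is the skew-symmetric matrix associated with `v ∈ ℝ³`. -/
def mskw (v : Fin 3 → ℝ) : Matrix (Fin 3) (Fin 3) ℝ :=
  !![0, -v 2, v 1; v 2, 0, -v 0; -v 1, v 0, 0]

/-- `vskw M = mskw⁻¹ (skw M)`, the vector associated with the skew part of `M`. -/
noncomputable def vskw (M : Matrix (Fin 3) (Fin 3) ℝ) : Fin 3 → ℝ :=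
  ![(M 2 1 - M 1 2) / 2, (M 0 2 - M 2 0) / 2, (M 1 0 - M 0 1) / 2]

/-- `Ξ M = Mᵀ - tr(M)·I`. -/
noncomputable def Xi (M : Matrix (Fin 3) (Fin 3) ℝ) : Matrix (Fin 3) (Fin 3) ℝ :=
  Mᵀ - Matrix.trace M • (1 : Matrix (Fin 3) (Fin 3) ℝ)

/-- `Ξ⁻¹ M = Mᵀ - ½ tr(M)·I`. -/
noncomputable def XiInv (M : Matrix (Fin 3) (Fin 3) ℝ) : Matrix (Fin 3) (Fin 3) ℝ :=
  Mᵀ - (Matrix.trace M / 2) • (1 : Matrix (Fin 3) (Fin 3) ℝ)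

/-- Symmetric part of a matrix. -/
noncomputable def symM (M : Matrix (Fin 3) (Fin 3) ℝ) : Matrix (Fin 3) (Fin 3) ℝ :=
  (1 / 2 : ℝ) • (M + Mᵀ)

/-- Identity (2.10a): `div (Ξ ∘ u) = 2 vskw (curl u)` for every smooth matrix field `u`. -/
theorem div_Xi_eq_two_vskw_curl
    (u : (Fin 3 → ℝ) → Matrix (Fin 3) (Fin 3) ℝ)
    (hu : ∀ i j, ContDiff ℝ (⊤ : ℕ∞) fun x => u x i j) :
    ∀ (x : Fin 3 → ℝ) (i : Fin 3),
      vdiv (fun y => Xi (u y) i) x = 2 * vskw (mcurl u x) i := by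

  intro x i
  have hd : ∀ i j, DifferentiableAt ℝ (fun y => u y i j) x :=
    fun i j => ((hu i j).differentiable (by simp)).differentiableAt
  have psub : ∀ (k : Fin 3) (f g : (Fin 3 → ℝ) → ℝ), DifferentiableAt ℝ f x →
      DifferentiableAt ℝ g x →
      pder k (fun y => f y - g y) x = pder k f x - pder k g x := by
    intro k f g hf hg
    simp [pder, fderiv_fun_sub hf hg]
  have padd : ∀ (k : Fin 3) (f g : (Fin 3 → ℝ) → ℝ), DifferentiableAt ℝ f x →
      DifferentiableAt ℝ g x →
      pder k (fun y => f y + g y) x = pder k f x + pder k g x := by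
    intro k f g hf hg
    simp [pder, fderiv_fun_add hf hg]
  fin_cases i <;>
  · simp only [vdiv, Xi, vskw, mcurl, vcurl, Matrix.sub_apply, Matrix.transpose_apply,
      Matrix.smul_apply, Matrix.one_apply, Matrix.trace, Matrix.diag, Fin.sum_univ_three,
      Matrix.of_apply, Matrix.cons_val_zero, Matrix.cons_val_one, Matrix.head_cons,
      Matrix.cons_val_two, Matrix.tail_cons, smul_eq_mul, Fin.isValue, Fin.mk_one,
      Fin.reduceFinMk, Fin.reduceEq, if_true, if_false, reduceIte, mul_one, mul_zero,
      sub_zero]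
    rw [psub _ _ _ (hd _ _) (((hd 0 0).fun_add (hd 1 1)).fun_add (hd 2 2)),
        padd _ _ _ ((hd 0 0).fun_add (hd 1 1)) (hd 2 2),
        padd _ _ _ (hd 0 0) (hd 1 1)]
    ring
end

section
/- For every smooth vector field v : ℝ³ → ℝ³, there holds curl(Ξ⁻¹(curl(mskw ∘ v))) = 0, where Ξ⁻¹ M = Mᵀ − ½ tr(M) I is applied pointwise; i.e. the composite operator curl Ξ⁻¹ curl mskw vanishes identically. -/
open Matrix

lemma pder_comm (f : (Fin 3 → ℝ) → ℝ) (hf : ContDiff ℝ (⊤ : ℕ∞) f) (i j : Fin 3) (x : Fin 3 → ℝ) :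
    pder i (pder j f) x = pder j (pder i f) x := by
  have h2 : ContDiffAt ℝ 2 f x := (hf.of_le (WithTop.coe_le_coe.mpr le_top)).contDiffAt
  have hsymm : IsSymmSndFDerivAt ℝ f x := h2.isSymmSndFDerivAt minSmoothness_of_isRCLikeNormedField.le
  have hd : DifferentiableAt ℝ (fderiv ℝ f) x := by
    have : ContDiff ℝ 1 (fderiv ℝ f) := (hf.fderiv_right (m := 1) (WithTop.coe_le_coe.mpr le_top)).of_le le_rfl
    exact this.differentiable one_ne_zero x
  have key : ∀ w u : Fin 3 → ℝ,
      fderiv ℝ (fun y => fderiv ℝ f y w) x u = fderiv ℝ (fderiv ℝ f) x u w := by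
    intro w u
    have := fderiv_clm_apply (c := fderiv ℝ f) (u := fun _ => w) hd (differentiableAt_const w)
    simp at this
    rw [show (fun y => fderiv ℝ f y w) = (fun y => (fderiv ℝ f y) ((fun _ => w) y)) from rfl, this]
    simp
  unfold pder
  rw [key, key, hsymm]

set_option maxHeartbeats 1000000 in
/-- Identity (2.10c): the composite operator `curl Ξ⁻¹ curl mskw` vanishes identically:
`curl (Ξ⁻¹ (curl (mskw ∘ v))) = 0` for every smooth vector field `v`. -/
theorem curl_XiInv_curl_mskw_eq_zero
    (v : (Fin 3 → ℝ) → (Fin 3 → ℝ)) (hv : ContDiff ℝ (⊤ : ℕ∞) v) :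
    ∀ x : Fin 3 → ℝ,
      mcurl (fun y => XiInv (mcurl (fun z => mskw (v z)) y)) x = 0 := by
  intro x
  have hinner : (fun y => XiInv (mcurl (fun z => mskw (v z)) y)) =
      (fun y => Matrix.of fun i j => -(pder j (fun z => v z i) y)) := by
    funext y
    ext i j
    fin_cases i <;> fin_cases j <;>
      simp [XiInv, mcurl, vcurl, mskw, pder, Matrix.trace, Fin.sum_univ_three, Matrix.one_apply,
        fderiv_neg, fderiv_const] <;> ring
  rw [hinner]
  ext i j
  have hf : ContDiff ℝ (⊤ : ℕ∞) (fun y => v y i) := contDiff_pi.1 hv i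
  have key : ∀ a b : Fin 3,
      fderiv ℝ (fun y => (fderiv ℝ (fun z => v z i) y) (Pi.single a 1)) x (Pi.single b 1) =
      fderiv ℝ (fun y => (fderiv ℝ (fun z => v z i) y) (Pi.single b 1)) x (Pi.single a 1) :=
    fun a b => pder_comm _ hf b a x
  fin_cases j <;>
    simp [mcurl, vcurl, pder, fderiv_neg] <;>
    linarith [key 0 1, key 1 2, key 2 0]
end

section
/- For every smooth matrix field u : ℝ³ → ℝ^{3×3} and every fixed vector s ∈ ℝ³, there holds pointwise sᵀ (curl u) n = curl_F ((u_{Fs})ᵀ). -/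
open Matrix

/-- Tangential projection `Q = I - n nᵀ`. -/
noncomputable def pQ (n : Fin 3 → ℝ) : Matrix (Fin 3) (Fin 3) ℝ := 1 - vecMulVec n n

/-- Directional derivative of a scalar field along the vector `t`. -/
noncomputable def dder (t : Fin 3 → ℝ) (f : (Fin 3 → ℝ) → ℝ) : (Fin 3 → ℝ) → ℝ :=
  fun x => fderiv ℝ f x t

/-- Surface gradient of a scalar: `grad_F φ = (∂_{t₁}φ) t₁ + (∂_{t₂}φ) t₂`. -/
noncomputable def gradF (t₁ t₂ : Fin 3 → ℝ) (φ : (Fin 3 → ℝ) → ℝ) (x : Fin 3 → ℝ) :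
    Fin 3 → ℝ :=
  dder t₁ φ x • t₁ + dder t₂ φ x • t₂

/-- Surface rot of a scalar: `rot_F φ = (∂_{t₂}φ) t₁ - (∂_{t₁}φ) t₂`. -/
noncomputable def rotF (t₁ t₂ : Fin 3 → ℝ) (φ : (Fin 3 → ℝ) → ℝ) (x : Fin 3 → ℝ) :
    Fin 3 → ℝ :=
  dder t₂ φ x • t₁ - dder t₁ φ x • t₂

/-- Surface curl of a (tangential) vector field `w = w₁ t₁ + w₂ t₂`:
`curl_F w = ∂_{t₁} w₂ - ∂_{t₂} w₁` where `wᵢ = w ⬝ᵥ tᵢ`. -/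
noncomputable def curlF (t₁ t₂ : Fin 3 → ℝ) (w : (Fin 3 → ℝ) → (Fin 3 → ℝ))
    (x : Fin 3 → ℝ) : ℝ :=
  dder t₁ (fun y => w y ⬝ᵥ t₂) x - dder t₂ (fun y => w y ⬝ᵥ t₁) x

/-- Surface divergence of a (tangential) vector field:
`div_F w = ∂_{t₁} w₁ + ∂_{t₂} w₂`. -/
noncomputable def divF (t₁ t₂ : Fin 3 → ℝ) (w : (Fin 3 → ℝ) → (Fin 3 → ℝ))
    (x : Fin 3 → ℝ) : ℝ :=
  dder t₁ (fun y => w y ⬝ᵥ t₁) x + dder t₂ (fun y => w y ⬝ᵥ t₂) x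

/-- Surface gradient of a (tangential) vector field:
`grad_F w = t₁ (grad_F w₁)ᵀ + t₂ (grad_F w₂)ᵀ`. -/
noncomputable def gradFvec (t₁ t₂ : Fin 3 → ℝ) (w : (Fin 3 → ℝ) → (Fin 3 → ℝ))
    (x : Fin 3 → ℝ) : Matrix (Fin 3) (Fin 3) ℝ :=
  vecMulVec t₁ (gradF t₁ t₂ (fun y => w y ⬝ᵥ t₁) x)
  + vecMulVec t₂ (gradF t₁ t₂ (fun y => w y ⬝ᵥ t₂) x)

/-- Surface rot of a (tangential) row field `q = q₁ t₁ᵀ + q₂ t₂ᵀ`: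
`rot_F q = t₁ (rot_F q₁)ᵀ + t₂ (rot_F q₂)ᵀ`. -/
noncomputable def rotFrow (t₁ t₂ : Fin 3 → ℝ) (q : (Fin 3 → ℝ) → (Fin 3 → ℝ))
    (x : Fin 3 → ℝ) : Matrix (Fin 3) (Fin 3) ℝ :=
  vecMulVec t₁ (rotF t₁ t₂ (fun y => q y ⬝ᵥ t₁) x)
  + vecMulVec t₂ (rotF t₁ t₂ (fun y => q y ⬝ᵥ t₂) x)

/-- Surface curl of a tangential matrix field `u` (e.g. `u = u_FF`), represented as the
row covector `curl_F u = (curl_F (u_{Ft₁})ᵀ) t₁ᵀ + (curl_F (u_{Ft₂})ᵀ) t₂ᵀ`, using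
`(u_{Fs})ᵀ = Q uᵀ s`. -/
noncomputable def curlFmat (t₁ t₂ n : Fin 3 → ℝ)
    (u : (Fin 3 → ℝ) → Matrix (Fin 3) (Fin 3) ℝ) (x : Fin 3 → ℝ) : Fin 3 → ℝ :=
  curlF t₁ t₂ (fun y => (pQ n * (u y)ᵀ) *ᵥ t₁) x • t₁
  + curlF t₁ t₂ (fun y => (pQ n * (u y)ᵀ) *ᵥ t₂) x • t₂

/-- Surface incompatibility of a tangential matrix field:
`inc_F u_FF = curl_F ((curl_F u_FF)ᵀ)`. -/
noncomputable def incF (t₁ t₂ n : Fin 3 → ℝ)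
    (u : (Fin 3 → ℝ) → Matrix (Fin 3) (Fin 3) ℝ) (x : Fin 3 → ℝ) : ℝ :=
  curlF t₁ t₂ (fun y => curlFmat t₁ t₂ n u y) x

/-- Surface trace: `tr_F M = t₁ᵀ M t₁ + t₂ᵀ M t₂`. -/
noncomputable def trF (t₁ t₂ : Fin 3 → ℝ) (M : Matrix (Fin 3) (Fin 3) ℝ) : ℝ :=
  t₁ ⬝ᵥ (M *ᵥ t₁) + t₂ ⬝ᵥ (M *ᵥ t₂)

lemma fderiv_dir_aux (f : (Fin 3 → ℝ) → ℝ) (x t : Fin 3 → ℝ) :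
    fderiv ℝ f x t = ∑ k, t k * fderiv ℝ f x (Pi.single k 1) := by
  have ht : t = ∑ k, t k • (Pi.single k 1 : Fin 3 → ℝ) := by
    funext m
    simp [Finset.sum_apply, Pi.single_apply]
  conv_lhs => rw [ht]
  rw [map_sum]
  simp [smul_eq_mul]

lemma dder_lin_aux (u : (Fin 3 → ℝ) → Matrix (Fin 3) (Fin 3) ℝ)
    (hu : ∀ i j, ContDiff ℝ (⊤ : ℕ∞) fun x => u x i j)
    (c : Fin 3 → Fin 3 → ℝ) (t x : Fin 3 → ℝ) :
    dder t (fun y => ∑ i, ∑ j, c i j * u y i j) x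
      = ∑ i, ∑ j, ∑ k, c i j * (t k * pder k (fun y => u y i j) x) := by
  have hd : ∀ i j, HasFDerivAt (fun y => u y i j) (fderiv ℝ (fun y => u y i j) x) x :=
    fun i j => ((hu i j).differentiable (by simp) x).hasFDerivAt
  have H : HasFDerivAt (fun y => ∑ i, ∑ j, c i j * u y i j)
      (∑ i : Fin 3, ∑ j : Fin 3, c i j • fderiv ℝ (fun y => u y i j) x) x := by
    apply HasFDerivAt.fun_sum; intro i _
    apply HasFDerivAt.fun_sum; intro j _
    exact (hd i j).const_mul (c i j)
  rw [dder, H.fderiv]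
  simp only [ContinuousLinearMap.sum_apply, ContinuousLinearMap.smul_apply, smul_eq_mul]
  refine Finset.sum_congr rfl fun i _ => Finset.sum_congr rfl fun j _ => ?_
  rw [fderiv_dir_aux]
  simp only [pder, Finset.mul_sum]

/-- Identity (curlid): `sᵀ (curl u) n = curl_F ((u_{Fs})ᵀ)` for every smooth matrix
field `u` and every fixed `s ∈ ℝ³`, where `(u_{Fs})ᵀ = Q uᵀ s`. -/
theorem curl_id
    (t₁ t₂ n : Fin 3 → ℝ)
    (ht₁ : t₁ ⬝ᵥ t₁ = 1) (ht₂ : t₂ ⬝ᵥ t₂ = 1) (hn : n ⬝ᵥ n = 1)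
    (ht₁t₂ : t₁ ⬝ᵥ t₂ = 0) (ht₁n : t₁ ⬝ᵥ n = 0) (ht₂n : t₂ ⬝ᵥ n = 0)
    (hcross : crossProduct t₁ t₂ = n)
    (u : (Fin 3 → ℝ) → Matrix (Fin 3) (Fin 3) ℝ)
    (hu : ∀ i j, ContDiff ℝ (⊤ : ℕ∞) fun x => u x i j)
    (s : Fin 3 → ℝ) :
    ∀ x : Fin 3 → ℝ,
      s ⬝ᵥ (mcurl u x *ᵥ n) = curlF t₁ t₂ (fun y => (pQ n * (u y)ᵀ) *ᵥ s) x := by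
  intro x
  have hnt1 : n ⬝ᵥ t₁ = 0 := by rw [dotProduct_comm]; exact ht₁n
  have hnt2 : n ⬝ᵥ t₂ = 0 := by rw [dotProduct_comm]; exact ht₂n
  have hexp : ∀ t : Fin 3 → ℝ, n ⬝ᵥ t = 0 →
      (fun y => ((pQ n * (u y)ᵀ) *ᵥ s) ⬝ᵥ t)
        = fun y => ∑ i, ∑ j, (s i * t j) * u y i j := by
    intro t hnt
    funext y
    have h := hnt
    simp only [dotProduct, Fin.sum_univ_three] at h ⊢
    simp only [pQ, Matrix.mulVec, Matrix.mul_apply, Matrix.sub_apply,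
      Matrix.one_apply, Matrix.vecMulVec_apply, Matrix.transpose_apply,
      dotProduct, Fin.sum_univ_three]
    norm_num [Fin.ext_iff]
    linear_combination (-(s 0 * (n 0 * u y 0 0 + n 1 * u y 0 1 + n 2 * u y 0 2)
      + s 1 * (n 0 * u y 1 0 + n 1 * u y 1 1 + n 2 * u y 1 2)
      + s 2 * (n 0 * u y 2 0 + n 1 * u y 2 1 + n 2 * u y 2 2))) * h
  have h0 : n 0 = t₁ 1 * t₂ 2 - t₁ 2 * t₂ 1 := by
    rw [← hcross, cross_apply]; rfl
  have h1 : n 1 = t₁ 2 * t₂ 0 - t₁ 0 * t₂ 2 := by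
    rw [← hcross, cross_apply]; rfl
  have h2 : n 2 = t₁ 0 * t₂ 1 - t₁ 1 * t₂ 0 := by
    rw [← hcross, cross_apply]; rfl
  unfold curlF
  rw [show (fun y => ((pQ n * (u y)ᵀ) *ᵥ s) ⬝ᵥ t₂)
      = fun y => ∑ i, ∑ j, (s i * t₂ j) * u y i j from hexp t₂ hnt2,
    show (fun y => ((pQ n * (u y)ᵀ) *ᵥ s) ⬝ᵥ t₁)
      = fun y => ∑ i, ∑ j, (s i * t₁ j) * u y i j from hexp t₁ hnt1,
    dder_lin_aux u hu _ t₁ x, dder_lin_aux u hu _ t₂ x]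
  simp only [mcurl, vcurl, Matrix.mulVec, dotProduct, Fin.sum_univ_three,
    Matrix.of_apply, Matrix.cons_val_zero, Matrix.cons_val_one, Matrix.head_cons,
    Matrix.cons_val_two, Matrix.tail_cons]
  rw [h0, h1, h2]
  ring
end

section
/- For every smooth matrix field u : ℝ³ → ℝ^{3×3} that is pointwise symmetric, there holds pointwise (inc u)_{nn} = inc_F u_FF, i.e. nᵀ (inc u) n equals inc_F(Q u Q). -/
open Matrix


section Helpers

/-- Directional derivative along `t` (same as `dder` below, defined early for helper lemmas). -/
noncomputable def dderAux (t : Fin 3 → ℝ) (f : (Fin 3 → ℝ) → ℝ) : (Fin 3 → ℝ) → ℝ :=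
  fun x => fderiv ℝ f x t

lemma dderAux_dir (v : Fin 3 → ℝ) (g : (Fin 3 → ℝ) → ℝ) (x : Fin 3 → ℝ) :
    dderAux v g x = ∑ k, v k * dderAux (Pi.single k 1) g x := by
  have hv : v = ∑ k, v k • (Pi.single k 1 : Fin 3 → ℝ) := by
    funext j
    simp [Finset.sum_apply, Pi.single_apply, Fin.sum_univ_three]
  calc fderiv ℝ g x v = fderiv ℝ g x (∑ k, v k • (Pi.single k 1 : Fin 3 → ℝ)) := by rw [← hv]
    _ = ∑ k, v k * fderiv ℝ g x (Pi.single k 1) := by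
        rw [map_sum]; refine Finset.sum_congr rfl fun k _ => ?_; rw [_root_.map_smul]; rfl

lemma dderAux_sub (v : Fin 3 → ℝ) (g h : (Fin 3 → ℝ) → ℝ) (x : Fin 3 → ℝ)
    (hg : DifferentiableAt ℝ g x) (hh : DifferentiableAt ℝ h x) :
    dderAux v (fun y => g y - h y) x = dderAux v g x - dderAux v h x := by
  unfold dderAux; rw [fderiv_fun_sub hg hh]; rfl

lemma contDiff_dderAux (v : Fin 3 → ℝ) (g : (Fin 3 → ℝ) → ℝ) (hg : ContDiff ℝ (⊤ : ℕ∞) g) :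
    ContDiff ℝ (⊤ : ℕ∞) (dderAux v g) := by
  have h1 : ContDiff ℝ (⊤ : ℕ∞) (fderiv ℝ g) := hg.fderiv_right (by exact le_rfl)
  exact h1.clm_apply contDiff_const

lemma dderAux_comm (v w : Fin 3 → ℝ) (g : (Fin 3 → ℝ) → ℝ) (hg : ContDiff ℝ (⊤ : ℕ∞) g)
    (x : Fin 3 → ℝ) :
    dderAux v (dderAux w g) x = dderAux w (dderAux v g) x := by
  have hd : ContDiff ℝ (⊤ : ℕ∞) (fderiv ℝ g) := hg.fderiv_right (by exact le_rfl)
  have hda : DifferentiableAt ℝ (fderiv ℝ g) x := hd.differentiable (by simp) x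
  have hsymm : IsSymmSndFDerivAt ℝ g x :=
    hg.contDiffAt.isSymmSndFDerivAt
      (by rw [minSmoothness_of_isRCLikeNormedField]; exact WithTop.coe_le_coe.mpr le_top)
  have key : ∀ a : Fin 3 → ℝ, fderiv ℝ (fun y => fderiv ℝ g y a) x
      = (fderiv ℝ (fderiv ℝ g) x).flip a := by
    intro a
    rw [show (fun y => fderiv ℝ g y a) = fun y => (fderiv ℝ g y) ((fun _ => a) y) from rfl,
      fderiv_clm_apply hda (differentiableAt_const a)]
    simp
  show fderiv ℝ (fun y => fderiv ℝ g y w) x v = fderiv ℝ (fun y => fderiv ℝ g y v) x w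
  rw [key w, key v]
  exact hsymm.eq v w

lemma dderAux_sum {ι : Type*} (S : Finset ι) (v : Fin 3 → ℝ) (g : ι → (Fin 3 → ℝ) → ℝ)
    (x : Fin 3 → ℝ) (hg : ∀ i ∈ S, DifferentiableAt ℝ (g i) x) :
    dderAux v (fun y => ∑ i ∈ S, g i y) x = ∑ i ∈ S, dderAux v (g i) x := by
  unfold dderAux
  rw [fderiv_fun_sum hg]
  simp

lemma dderAux_const_mul (v : Fin 3 → ℝ) (c : ℝ) (g : (Fin 3 → ℝ) → ℝ) (x : Fin 3 → ℝ)
    (hg : DifferentiableAt ℝ g x) :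
    dderAux v (fun y => c * g y) x = c * dderAux v g x := by
  unfold dderAux; rw [fderiv_const_mul hg]; rfl

lemma dderAux_comb9 (v a b : Fin 3 → ℝ) (g : Fin 3 → Fin 3 → (Fin 3 → ℝ) → ℝ)
    (hg : ∀ i j, Differentiable ℝ (g i j)) (z : Fin 3 → ℝ) :
    dderAux v (fun y => ∑ i, ∑ j, (a i * b j) * g i j y) z
      = ∑ i, ∑ j, (a i * b j) * dderAux v (g i j) z := by
  rw [dderAux_sum Finset.univ v _ z
    (fun i _ => DifferentiableAt.fun_sum fun j _ => ((hg i j) z).const_mul _)]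
  refine Finset.sum_congr rfl fun i _ => ?_
  rw [dderAux_sum Finset.univ v _ z (fun j _ => ((hg i j) z).const_mul _)]
  exact Finset.sum_congr rfl fun j _ => dderAux_const_mul v _ _ z ((hg i j) z)

lemma dderAux_comb3 (v w : Fin 3 → ℝ) (g : Fin 3 → (Fin 3 → ℝ) → ℝ)
    (hg : ∀ l, Differentiable ℝ (g l)) (z : Fin 3 → ℝ) :
    dderAux v (fun y => ∑ l, w l * g l y) z = ∑ l, w l * dderAux v (g l) z := by
  rw [dderAux_sum Finset.univ v _ z (fun l _ => ((hg l) z).const_mul _)]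
  exact Finset.sum_congr rfl fun l _ => dderAux_const_mul v _ _ z ((hg l) z)

lemma vmv_mulVec (a b v : Fin 3 → ℝ) : vecMulVec a b *ᵥ v = (b ⬝ᵥ v) • a := by
  funext i
  simp [mulVec, dotProduct, vecMulVec_apply, Fin.sum_univ_three]
  ring

end Helpers

section QHelpers

lemma pQ_mulVec (n t : Fin 3 → ℝ) (h : n ⬝ᵥ t = 0) : pQ n *ᵥ t = t := by
  rw [pQ, sub_mulVec, one_mulVec, vmv_mulVec, h, zero_smul, sub_zero]

lemma pQ_transpose (n : Fin 3 → ℝ) : (pQ n)ᵀ = pQ n := by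
  rw [pQ, transpose_sub, transpose_one]
  congr 1
  ext i j
  simp [vecMulVec_apply, mul_comm]

lemma pQ_idem (n : Fin 3 → ℝ) (hn : n ⬝ᵥ n = 1) : pQ n * pQ n = pQ n := by
  rw [pQ, sub_mul, one_mul, mul_sub, mul_one]
  have h : vecMulVec n n * vecMulVec n n = vecMulVec n n := by
    ext i j
    simp only [Matrix.mul_apply, vecMulVec_apply, Fin.sum_univ_three]
    have hn' := hn
    simp only [dotProduct, Fin.sum_univ_three] at hn'
    linear_combination (n i * n j) * hn'
  rw [h]
  simp

lemma key_field (n r s : Fin 3 → ℝ) (hn : n ⬝ᵥ n = 1) (hr : n ⬝ᵥ r = 0) (hs : n ⬝ᵥ s = 0)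
    (M : Matrix (Fin 3) (Fin 3) ℝ) (hM : Mᵀ = M) :
    ((pQ n * (pQ n * M * pQ n)ᵀ) *ᵥ s) ⬝ᵥ r = r ⬝ᵥ (M *ᵥ s) := by
  have h1 : (pQ n * M * pQ n)ᵀ = pQ n * M * pQ n := by
    rw [transpose_mul, transpose_mul, pQ_transpose, hM, ← Matrix.mul_assoc]
  have h2 : pQ n * (pQ n * M * pQ n) = pQ n * M * pQ n := by
    calc pQ n * (pQ n * M * pQ n) = (pQ n * pQ n) * M * pQ n := by
          rw [Matrix.mul_assoc (pQ n * pQ n) M (pQ n), Matrix.mul_assoc, Matrix.mul_assoc]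
      _ = pQ n * M * pQ n := by rw [pQ_idem n hn]
  rw [h1, h2, dotProduct_comm]
  rw [Matrix.mul_assoc, ← mulVec_mulVec, ← mulVec_mulVec, pQ_mulVec n s hs]
  rw [dotProduct_mulVec,
    show r ᵥ* pQ n = r by rw [← pQ_transpose, vecMul_transpose, pQ_mulVec n r hr]]

end QHelpers

/-- The row-wise incompatibility `inc u = curl ((curl u)ᵀ)`. -/
noncomputable def incM (u : (Fin 3 → ℝ) → Matrix (Fin 3) (Fin 3) ℝ) :
    (Fin 3 → ℝ) → Matrix (Fin 3) (Fin 3) ℝ :=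
  mcurl (fun y => (mcurl u y)ᵀ)

lemma dder_eq_dderAux : dder = dderAux := rfl

/-- Identity (id1): `(inc u)_{nn} = inc_F u_FF` for every smooth symmetric matrix field `u`. -/
theorem inc_nn_eq_incF_FF
    (t₁ t₂ n : Fin 3 → ℝ)
    (ht₁ : t₁ ⬝ᵥ t₁ = 1) (ht₂ : t₂ ⬝ᵥ t₂ = 1) (hn : n ⬝ᵥ n = 1)
    (ht₁t₂ : t₁ ⬝ᵥ t₂ = 0) (ht₁n : t₁ ⬝ᵥ n = 0) (ht₂n : t₂ ⬝ᵥ n = 0)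
    (hcross : crossProduct t₁ t₂ = n)
    (u : (Fin 3 → ℝ) → Matrix (Fin 3) (Fin 3) ℝ)
    (hu : ∀ i j, ContDiff ℝ (⊤ : ℕ∞) fun x => u x i j)
    (hsym : ∀ x, (u x)ᵀ = u x) :
    ∀ x : Fin 3 → ℝ,
      n ⬝ᵥ (incM u x *ᵥ n) = incF t₁ t₂ n (fun y => pQ n * u y * pQ n) x := by
  intro x
  have hfd : ∀ i j, Differentiable ℝ (fun y => u y i j) :=
    fun i j => (hu i j).differentiable (by simp)
  have hφc : ∀ (a b : Fin 3 → ℝ), ContDiff ℝ (⊤ : ℕ∞) (fun y => a ⬝ᵥ (u y *ᵥ b)) := by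
    intro a b
    have h : (fun y => a ⬝ᵥ (u y *ᵥ b)) = fun y => ∑ i, ∑ j, (a i * b j) * u y i j := by
      funext y
      simp only [dotProduct, mulVec, Fin.sum_univ_three]
      ring
    rw [h]
    exact ContDiff.sum fun i _ => ContDiff.sum fun j _ =>
      contDiff_const.mul (hu i j)
  set D : Fin 3 → Fin 3 → Fin 3 → Fin 3 → ℝ :=
    fun k l i j => dderAux (Pi.single k 1) (dderAux (Pi.single l 1) (fun y => u y i j)) x
    with hD
  -- the master expansion lemma
  have expand : ∀ (v w a b : Fin 3 → ℝ),
      dderAux v (dderAux w (fun y => a ⬝ᵥ (u y *ᵥ b))) x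
        = ∑ k, ∑ l, ∑ i, ∑ j, v k * w l * (a i * b j) * D k l i j := by
    intro v w a b
    have h0 : (fun y => a ⬝ᵥ (u y *ᵥ b)) = fun y => ∑ i, ∑ j, (a i * b j) * u y i j := by
      funext y
      simp only [dotProduct, mulVec, Fin.sum_univ_three]
      ring
    rw [h0]
    have h1 : dderAux w (fun y => ∑ i, ∑ j, (a i * b j) * u y i j)
        = fun z => ∑ i, ∑ j, (a i * b j) * dderAux w (fun y => u y i j) z :=
      funext fun z => dderAux_comb9 w a b _ hfd z
    rw [h1, dderAux_comb9 v a b _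
      (fun i j => (contDiff_dderAux w _ (hu i j)).differentiable (by simp)) x]
    have h2 : ∀ i j, dderAux v (dderAux w (fun y => u y i j)) x
        = ∑ k, ∑ l, v k * w l * D k l i j := by
      intro i j
      have h3 : dderAux w (fun y => u y i j)
          = fun z => ∑ l, w l * dderAux (Pi.single l 1) (fun y => u y i j) z :=
        funext fun z => dderAux_dir w _ z
      rw [h3, dderAux_comb3 v w _
        (fun l => (contDiff_dderAux _ _ (hu i j)).differentiable (by simp)) x]
      simp only [Fin.sum_univ_three]
      rw [dderAux_dir v, dderAux_dir v, dderAux_dir v]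
      simp only [Fin.sum_univ_three, hD]
      ring
    calc (∑ i, ∑ j, (a i * b j) * dderAux v (dderAux w (fun y => u y i j)) x)
        = ∑ i, ∑ j, (a i * b j) * ∑ k, ∑ l, v k * w l * D k l i j :=
          Finset.sum_congr rfl fun i _ => Finset.sum_congr rfl fun j _ => by rw [h2]
      _ = _ := by
          simp only [Fin.sum_univ_three]
          ring
  -- rewrite the fields appearing on the right-hand side
  have hnt₁ : n ⬝ᵥ t₁ = 0 := by rw [dotProduct_comm]; exact ht₁n
  have hnt₂ : n ⬝ᵥ t₂ = 0 := by rw [dotProduct_comm]; exact ht₂n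
  have hw : ∀ (r s : Fin 3 → ℝ), n ⬝ᵥ r = 0 → n ⬝ᵥ s = 0 →
      (fun y => ((pQ n * ((pQ n * u y * pQ n))ᵀ) *ᵥ s) ⬝ᵥ r) = fun y => r ⬝ᵥ (u y *ᵥ s) :=
    fun r s hr hs => funext fun y => key_field n r s hn hr hs (u y) (hsym y)
  -- reduce the right-hand side
  have hRHS : incF t₁ t₂ n (fun y => pQ n * u y * pQ n) x
      = dderAux t₁ (fun y => dderAux t₁ (fun z => t₂ ⬝ᵥ (u z *ᵥ t₂)) y
          - dderAux t₂ (fun z => t₁ ⬝ᵥ (u z *ᵥ t₂)) y) x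
        - dderAux t₂ (fun y => dderAux t₁ (fun z => t₂ ⬝ᵥ (u z *ᵥ t₁)) y
          - dderAux t₂ (fun z => t₁ ⬝ᵥ (u z *ᵥ t₁)) y) x := by
    have ht₂t₁ : t₂ ⬝ᵥ t₁ = 0 := by rw [dotProduct_comm]; exact ht₁t₂
    simp only [incF, curlF, curlFmat, dder_eq_dderAux]
    congr 1
    · congr 1
      funext y
      simp only [add_dotProduct, smul_dotProduct, smul_eq_mul, ht₁t₂, ht₂, mul_zero, mul_one,
        zero_add]
      rw [hw t₂ t₂ hnt₂ hnt₂, hw t₁ t₂ hnt₁ hnt₂]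
    · congr 1
      funext y
      simp only [add_dotProduct, smul_dotProduct, smul_eq_mul, ht₂t₁, ht₁, mul_zero, mul_one,
        add_zero]
      rw [hw t₂ t₁ hnt₂ hnt₁, hw t₁ t₁ hnt₁ hnt₁]
  rw [hRHS]
  rw [dderAux_sub t₁ _ _ x
      ((contDiff_dderAux t₁ _ (hφc t₂ t₂)).differentiable (by simp) x)
      ((contDiff_dderAux t₂ _ (hφc t₁ t₂)).differentiable (by simp) x),
    dderAux_sub t₂ _ _ x
      ((contDiff_dderAux t₁ _ (hφc t₂ t₁)).differentiable (by simp) x)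
      ((contDiff_dderAux t₂ _ (hφc t₁ t₁)).differentiable (by simp) x)]
  rw [expand t₁ t₁ t₂ t₂, expand t₁ t₂ t₁ t₂, expand t₂ t₁ t₂ t₁, expand t₂ t₂ t₁ t₁]
  -- reduce the left-hand side
  have hpder : ∀ (k c d : Fin 3) (i j i' j' : Fin 3),
      pder k (fun y => pder c (fun z => u z i j) y - pder d (fun z => u z i' j') y) x
        = D k c i j - D k d i' j' := by
    intro k c d i j i' j'
    rw [show pder k (fun y => pder c (fun z => u z i j) y - pder d (fun z => u z i' j') y) x
        = dderAux (Pi.single k 1) (fun y => dderAux (Pi.single c 1) (fun z => u z i j) y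
            - dderAux (Pi.single d 1) (fun z => u z i' j') y) x from rfl]
    rw [dderAux_sub _ _ _ x
      ((contDiff_dderAux _ _ (hu i j)).differentiable (by simp) x)
      ((contDiff_dderAux _ _ (hu i' j')).differentiable (by simp) x)]
  simp only [incM, mcurl, vcurl, dotProduct, mulVec, Fin.sum_univ_three, transpose_apply,
    Matrix.of_apply, Matrix.cons_val', Matrix.cons_val_zero, Matrix.cons_val_one,
    Matrix.head_cons, Matrix.cons_val_two, Matrix.tail_cons, Matrix.head_fin_const]
  simp only [hpder]
  -- symmetrize D and substitute n
  have hDsymu : ∀ k l i j, D k l i j = D k l j i := by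
    intro k l i j
    simp only [hD]
    have : (fun y => u y i j) = fun y => u y j i := by
      funext y
      conv_lhs => rw [← hsym y]
      rfl
    rw [this]
  have hDcomm : ∀ k l i j, D k l i j = D l k i j := by
    intro k l i j
    simp only [hD]
    exact dderAux_comm _ _ _ (hu i j) x
  have r1 : ∀ k l, D k l 1 0 = D k l 0 1 := fun k l => hDsymu k l 1 0
  have r2 : ∀ k l, D k l 2 0 = D k l 0 2 := fun k l => hDsymu k l 2 0
  have r3 : ∀ k l, D k l 2 1 = D k l 1 2 := fun k l => hDsymu k l 2 1
  have q1 : ∀ i j, D 1 0 i j = D 0 1 i j := fun i j => hDcomm 1 0 i j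
  have q2 : ∀ i j, D 2 0 i j = D 0 2 i j := fun i j => hDcomm 2 0 i j
  have q3 : ∀ i j, D 2 1 i j = D 1 2 i j := fun i j => hDcomm 2 1 i j
  repeat rw [r1]
  repeat rw [r2]
  repeat rw [r3]
  repeat rw [q1]
  repeat rw [q2]
  repeat rw [q3]
  have hn0 : n 0 = t₁ 1 * t₂ 2 - t₁ 2 * t₂ 1 := by rw [← hcross, cross_apply]; rfl
  have hn1 : n 1 = t₁ 2 * t₂ 0 - t₁ 0 * t₂ 2 := by rw [← hcross, cross_apply]; rfl
  have hn2 : n 2 = t₁ 0 * t₂ 1 - t₁ 1 * t₂ 0 := by rw [← hcross, cross_apply]; rfl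
  rw [hn0, hn1, hn2]
  ring
end
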